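/- arXiv:2207.13789 — 2 statements merged into one kernel-verified Lean document; each statement's English description precedes it below -/
import Mathlib

section
/- Let F be the probabilistic refinement of a spectral point, G and H graphs, and P a probability distribution on V(G) × V(H) with marginal P_H on V(H). Then F(H, P_H) ≤ F(G ⊠ H, P). -/
open Finset MeasureTheory Filter Real

noncomputable section

/-- Strong product of simple graphs. -/
def strongProd {V W : Type} (G : SimpleGraph V) (H : SimpleGraph W) : SimpleGraph (V × W) where
  Adj a b := a ≠ b ∧ (G.Adj a.1 b.1 ∨ a.1 = b.1) ∧ (H.Adj a.2 b.2 ∨ a.2 = b.2)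
  symm := ⟨by
    rintro a b ⟨hne, h1, h2⟩
    exact ⟨hne.symm, h1.imp (fun h => G.adj_symm h) Eq.symm, h2.imp (fun h => H.adj_symm h) Eq.symm⟩⟩
  loopless := ⟨fun a h => h.1 rfl⟩

/-- n-th strong power of a simple graph. -/
def strongPow {V : Type} (G : SimpleGraph V) (n : ℕ) : SimpleGraph (Fin n → V) where
  Adj x y := x ≠ y ∧ ∀ i, G.Adj (x i) (y i) ∨ x i = y i
  symm := ⟨by
    rintro x y ⟨hne, h⟩
    exact ⟨hne.symm, fun i => (h i).imp (fun h' => G.adj_symm h') Eq.symm⟩⟩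
  loopless := ⟨fun x h => h.1 rfl⟩

/-- Disjoint union of simple graphs. -/
def sumGraph {V W : Type} (G : SimpleGraph V) (H : SimpleGraph W) : SimpleGraph (V ⊕ W) where
  Adj a b := Sum.LiftRel G.Adj H.Adj a b
  symm := ⟨by
    rintro a b (h | h)
    · exact Sum.LiftRel.inl (G.adj_symm ‹_›)
    · exact Sum.LiftRel.inr (H.adj_symm ‹_›)⟩
  loopless := ⟨by
    rintro a (h | h)
    · exact G.irrefl ‹_›
    · exact H.irrefl ‹_›⟩

/-- An element of the asymptotic spectrum of graphs. -/
structure SpectralPoint where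
  f : ∀ (V : Type) [Fintype V], SimpleGraph V → ℝ
  nonneg : ∀ (V : Type) [Fintype V] (G : SimpleGraph V), 0 ≤ f V G
  map_sum : ∀ (V W : Type) [Fintype V] [Fintype W] (G : SimpleGraph V) (H : SimpleGraph W),
    f (V ⊕ W) (sumGraph G H) = f V G + f W H
  map_strong : ∀ (V W : Type) [Fintype V] [Fintype W] (G : SimpleGraph V) (H : SimpleGraph W),
    f (V × W) (strongProd G H) = f V G * f W H
  mono : ∀ (V W : Type) [Fintype V] [Fintype W] (G : SimpleGraph V) (H : SimpleGraph W),
    (Hᶜ →g Gᶜ) → f W H ≤ f V G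
  map_edgeless : ∀ d : ℕ, f (Fin d) ⊥ = d

def IsDistr {V : Type} [Fintype V] (P : V → ℝ) : Prop := (∀ v, 0 ≤ P v) ∧ ∑ v, P v = 1

def margFst {V W : Type} [Fintype W] (P : V × W → ℝ) : V → ℝ := fun v => ∑ w, P (v, w)
def margSnd {V W : Type} [Fintype V] (P : V × W → ℝ) : W → ℝ := fun w => ∑ v, P (v, w)

open scoped Classical in
/-- Pushforward of a distribution along a map. -/
def push {V W : Type} [Fintype W] (φ : W → V) (P : W → ℝ) : V → ℝ :=
  fun v => ∑ w, if φ w = v then P w else 0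

/-- Shannon entropy (base 2). -/
def ent2 {V : Type} [Fintype V] (P : V → ℝ) : ℝ := ∑ v, -(P v * Real.logb 2 (P v))

/-- Binary entropy. -/
def binEnt (p : ℝ) : ℝ := -(p * Real.logb 2 p) - ((1 - p) * Real.logb 2 (1 - p))

/-- A spectral point together with its probabilistic refinement and its
characterizing properties. -/
structure PRefinement extends SpectralPoint where
  F : ∀ (V : Type) [Fintype V], SimpleGraph V → (V → ℝ) → ℝ
  concave : ∀ (V : Type) [Fintype V] (G : SimpleGraph V) (P Q : V → ℝ) (t : ℝ),
    IsDistr P → IsDistr Q → 0 ≤ t → t ≤ 1 →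
    t * F V G P + (1 - t) * F V G Q ≤ F V G (fun v => t * P v + (1 - t) * Q v)
  subadd : ∀ (V W : Type) [Fintype V] [Fintype W] (G : SimpleGraph V) (H : SimpleGraph W)
    (P : V × W → ℝ), IsDistr P →
    F (V × W) (strongProd G H) P ≤ F V G (margFst P) + F W H (margSnd P)
  subadd' : ∀ (V W : Type) [Fintype V] [Fintype W] (G : SimpleGraph V) (H : SimpleGraph W)
    (P : V × W → ℝ), IsDistr P →
    F V G (margFst P) + F W H (margSnd P) ≤
      F (V × W) (strongProd G H) P + (ent2 (margFst P) + ent2 (margSnd P) - ent2 P)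
  map_sumF : ∀ (V W : Type) [Fintype V] [Fintype W] (G : SimpleGraph V) (H : SimpleGraph W)
    (PG : V → ℝ) (PH : W → ℝ) (p : ℝ), IsDistr PG → IsDistr PH → 0 ≤ p → p ≤ 1 →
    F (V ⊕ W) (sumGraph G H) (Sum.elim (fun v => p * PG v) (fun w => (1 - p) * PH w)) =
      p * F V G PG + (1 - p) * F W H PH + binEnt p
  monoF : ∀ (V W : Type) [Fintype V] [Fintype W] (G : SimpleGraph V) (H : SimpleGraph W)
    (φ : Hᶜ →g Gᶜ) (P : W → ℝ), IsDistr P → F W H P ≤ F V G (push φ P)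
  le_logf : ∀ (V : Type) [Fintype V] (G : SimpleGraph V) (P : V → ℝ), IsDistr P →
    F V G P ≤ Real.logb 2 (f V G)
  exists_max : ∀ (V : Type) [Fintype V] [Nonempty V] (G : SimpleGraph V),
    ∃ P, IsDistr P ∧ F V G P = Real.logb 2 (f V G)


lemma isDistr_push_aux {V W : Type} [Fintype V] [Fintype W] (φ : W → V) (P : W → ℝ)
    (hP : IsDistr P) : IsDistr (push φ P) := by
  classical
  constructor
  · intro v
    apply Finset.sum_nonneg
    intro w _
    split
    · exact hP.1 w
    · exact le_refl 0
  · unfold push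
    rw [Finset.sum_comm]
    calc ∑ w, ∑ v, (if φ w = v then P w else 0) = ∑ w, P w := by
          refine Finset.sum_congr rfl fun w _ => ?_
          simp
      _ = 1 := hP.2

lemma isDistr_mix {V ι : Type} [Fintype V] (s : Finset ι) (lam : ι → ℝ) (Q : ι → V → ℝ)
    (h0 : ∀ i ∈ s, 0 ≤ lam i) (h1 : ∑ i ∈ s, lam i = 1)
    (hQ : ∀ i ∈ s, IsDistr (Q i)) : IsDistr (fun v => ∑ i ∈ s, lam i * Q i v) := by
  constructor
  · intro v
    exact Finset.sum_nonneg fun i hi => mul_nonneg (h0 i hi) ((hQ i hi).1 v)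
  · rw [Finset.sum_comm]
    calc ∑ i ∈ s, ∑ v, lam i * Q i v = ∑ i ∈ s, lam i := by
          refine Finset.sum_congr rfl fun i hi => ?_
          rw [← Finset.mul_sum, (hQ i hi).2, mul_one]
      _ = 1 := h1

lemma jensen (R : PRefinement) (V : Type) [Fintype V] (G : SimpleGraph V) {ι : Type}
    (s : Finset ι) (lam : ι → ℝ) (Q : ι → V → ℝ) :
    (∀ i ∈ s, 0 ≤ lam i) → (∑ i ∈ s, lam i = 1) → (∀ i ∈ s, IsDistr (Q i)) →
    ∑ i ∈ s, lam i * R.F V G (Q i) ≤ R.F V G (fun v => ∑ i ∈ s, lam i * Q i v) := by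
  classical
  induction s using Finset.induction_on generalizing lam Q with
  | empty => intro _ h1 _; simp at h1
  | @insert a s ha ih =>
    intro h0 h1 hQ
    simp only [Finset.sum_insert ha] at h1 ⊢
    have ht0 : 0 ≤ lam a := h0 a (Finset.mem_insert_self a s)
    have hrest0 : 0 ≤ ∑ i ∈ s, lam i :=
      Finset.sum_nonneg fun i hi => h0 i (Finset.mem_insert_of_mem hi)
    have hrest : ∑ i ∈ s, lam i = 1 - lam a := by linarith
    have ht1 : lam a ≤ 1 := by linarith
    have hQa : IsDistr (Q a) := hQ a (Finset.mem_insert_self a s)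
    by_cases hz : ∑ i ∈ s, lam i = 0
    · have hall : ∀ i ∈ s, lam i = 0 := by
        intro i hi
        have := (Finset.sum_eq_zero_iff_of_nonneg
          (fun j hj => h0 j (Finset.mem_insert_of_mem hj))).1 hz
        exact this i hi
      have hta : lam a = 1 := by rw [hz] at h1; linarith
      have heq : (fun v => lam a * Q a v + ∑ i ∈ s, lam i * Q i v) = Q a := by
        funext v
        rw [hta, one_mul, Finset.sum_eq_zero fun i hi => by rw [hall i hi, zero_mul], add_zero]
      rw [heq, hta, one_mul, Finset.sum_eq_zero fun i hi => by rw [hall i hi, zero_mul], add_zero]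
    · have hrpos : 0 < ∑ i ∈ s, lam i := lt_of_le_of_ne hrest0 (Ne.symm hz)
      set r := ∑ i ∈ s, lam i with hr
      set mu : ι → ℝ := fun i => lam i / r with hmu
      have hmu0 : ∀ i ∈ s, 0 ≤ mu i :=
        fun i hi => div_nonneg (h0 i (Finset.mem_insert_of_mem hi)) hrpos.le
      have hmu1 : ∑ i ∈ s, mu i = 1 := by
        rw [hmu, ← Finset.sum_div, div_self hz]
      have hQs : ∀ i ∈ s, IsDistr (Q i) := fun i hi => hQ i (Finset.mem_insert_of_mem hi)
      have ihs := ih mu Q hmu0 hmu1 hQs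
      set Qbar : V → ℝ := fun v => ∑ i ∈ s, mu i * Q i v with hQbar
      have hQbarD : IsDistr Qbar := isDistr_mix s mu Q hmu0 hmu1 hQs
      have hconc := R.concave V G (Q a) Qbar (lam a) hQa hQbarD ht0 ht1
      have hlm : ∀ i ∈ s, lam i = r * mu i := by
        intro i hi
        rw [hmu]; field_simp
      have hsum1 : ∑ i ∈ s, lam i * R.F V G (Q i) ≤ r * R.F V G Qbar := by
        calc ∑ i ∈ s, lam i * R.F V G (Q i) = r * ∑ i ∈ s, mu i * R.F V G (Q i) := by
              rw [Finset.mul_sum]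
              exact Finset.sum_congr rfl fun i hi => by rw [hlm i hi, mul_assoc]
          _ ≤ r * R.F V G Qbar := by
              exact mul_le_mul_of_nonneg_left ihs hrpos.le
      have hfun : (fun v => lam a * Q a v + (1 - lam a) * Qbar v)
          = (fun v => lam a * Q a v + ∑ i ∈ s, lam i * Q i v) := by
        funext v
        congr 1
        rw [← hrest, hQbar, Finset.mul_sum]
        exact Finset.sum_congr rfl fun i hi => by rw [← mul_assoc, ← hlm i hi]
      rw [hfun] at hconc
      have : lam a * R.F V G (Q a) + ∑ i ∈ s, lam i * R.F V G (Q i)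
          ≤ lam a * R.F V G (Q a) + (1 - lam a) * R.F V G Qbar := by
        rw [← hrest]; linarith
      linarith

/-- The map `w ↦ (ψ w, w)` is a homomorphism of complements into the strong product. -/
def phiHom {V W : Type} (G : SimpleGraph V) (H : SimpleGraph W) (ψ : W → V) :
    Hᶜ →g (strongProd G H)ᶜ where
  toFun w := (ψ w, w)
  map_rel' := by
    intro a b hab
    rw [SimpleGraph.compl_adj] at hab ⊢
    obtain ⟨hne, hnadj⟩ := hab
    refine ⟨fun h => hne (congrArg Prod.snd h), ?_⟩
    intro hadj
    have hadj' : _ ∧ _ ∧ (H.Adj a b ∨ a = b) := hadj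
    obtain ⟨-, -, (h | h)⟩ := hadj'
    · exact hnadj h
    · exact hne h

theorem F_marginal_le_F_strongProd
    (R : PRefinement) (V W : Type) [Fintype V] [Fintype W]
    (G : SimpleGraph V) (H : SimpleGraph W)
    (P : V × W → ℝ) (hP : IsDistr P) :
    R.F W H (margSnd P) ≤ R.F (V × W) (strongProd G H) P := by
  classical
  rcases isEmpty_or_nonempty V with hV | hV
  · exfalso
    haveI : IsEmpty (V × W) := ⟨fun p => hV.elim p.1⟩
    have := hP.2
    rw [Finset.univ_eq_empty, Finset.sum_empty] at this
    exact zero_ne_one this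
  set PH : W → ℝ := margSnd P with hPHdef
  have hPH : IsDistr PH := by
    constructor
    · intro w; exact Finset.sum_nonneg fun v _ => hP.1 _
    · calc ∑ w, ∑ v, P (v, w) = ∑ v, ∑ w, P (v, w) := Finset.sum_comm
        _ = ∑ p : V × W, P p := (Fintype.sum_prod_type _).symm
        _ = 1 := hP.2
  obtain ⟨v0⟩ := hV
  -- conditional distribution
  set q : W → V → ℝ := fun w v =>
    if PH w = 0 then (if v = v0 then 1 else 0) else P (v, w) / PH w with hqdef
  have hq0 : ∀ w v, 0 ≤ q w v := by
    intro w v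
    simp only [hqdef]
    split
    · split <;> norm_num
    · exact div_nonneg (hP.1 _) (hPH.1 w)
  have hq1 : ∀ w, ∑ v, q w v = 1 := by
    intro w
    simp only [hqdef]
    by_cases h : PH w = 0
    · simp [h]
    · simp only [h, if_false]
      rw [← Finset.sum_div]
      rw [show ∑ v, P (v, w) = PH w from rfl]
      exact div_self h
  have hqP : ∀ w v, q w v * PH w = P (v, w) := by
    intro w v
    simp only [hqdef]
    by_cases h : PH w = 0
    · have hz : P (v, w) = 0 := by
        have := (Finset.sum_eq_zero_iff_of_nonneg (fun v _ => hP.1 (v, w))).1 h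
        exact this v (Finset.mem_univ v)
      simp [h, hz]
    · simp only [h, if_false]
      exact div_mul_cancel₀ _ h
  -- weights and pushforward distributions
  set lam : (W → V) → ℝ := fun ψ => ∏ w, q w (ψ w) with hlamdef
  have hlam0 : ∀ ψ, 0 ≤ lam ψ := fun ψ => Finset.prod_nonneg fun w _ => hq0 w (ψ w)
  have hlam1 : ∑ ψ : W → V, lam ψ = 1 := by
    rw [hlamdef, ← Fintype.prod_sum fun w v => q w v]
    rw [Finset.prod_congr rfl fun w _ => hq1 w]
    exact Finset.prod_const_one
  set Qd : (W → V) → (V × W → ℝ) := fun ψ => push (fun w => (ψ w, w)) PH with hQddef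
  have hQdval : ∀ ψ v w, Qd ψ (v, w) = if ψ w = v then PH w else 0 := by
    intro ψ v w
    simp only [hQddef, push]
    rw [Finset.sum_eq_single w]
    · by_cases h : ψ w = v
      · simp [h]
      · simp [h, Prod.ext_iff]
    · intro w' _ hw'
      simp [Prod.ext_iff, hw']
    · intro h; exact absurd (Finset.mem_univ _) h
  have hQdD : ∀ ψ, IsDistr (Qd ψ) := fun ψ => isDistr_push_aux _ _ hPH
  have hmono : ∀ ψ : W → V, R.F W H PH ≤ R.F (V × W) (strongProd G H) (Qd ψ) :=
    fun ψ => R.monoF (V × W) W (strongProd G H) H (phiHom G H ψ) PH hPH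
  -- the convex decomposition
  have hmix : ∀ v w, ∑ ψ : W → V, lam ψ * Qd ψ (v, w) = P (v, w) := by
    intro v w
    set g : W → V → ℝ := fun w' x =>
      if w' = w then (if x = v then q w x * PH w else 0) else q w' x with hgdef
    have step1 : ∀ ψ : W → V, lam ψ * Qd ψ (v, w) = ∏ w', g w' (ψ w') := by
      intro ψ
      rw [hQdval]
      by_cases hv : ψ w = v
      · rw [if_pos hv]
        show (∏ w' : W, q w' (ψ w')) * PH w = ∏ w' : W, g w' (ψ w')
        rw [Finset.prod_eq_mul_prod_sdiff_singleton_of_mem (Finset.mem_univ w) (fun w' => q w' (ψ w')),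
          Finset.prod_eq_mul_prod_sdiff_singleton_of_mem (Finset.mem_univ w) (fun w' => g w' (ψ w'))]
        have hgw : g w (ψ w) = q w (ψ w) * PH w := by
          simp [hgdef, hv]
        have hrest : ∏ w' ∈ Finset.univ \ {w}, g w' (ψ w')
            = ∏ w' ∈ Finset.univ \ {w}, q w' (ψ w') := by
          refine Finset.prod_congr rfl fun x hx => ?_
          have hxw : x ≠ w := by
            rcases Finset.mem_sdiff.1 hx with ⟨-, hx2⟩
            simpa using hx2
          simp [hgdef, hxw]
        rw [hgw, hrest]; ring
      · rw [if_neg hv, mul_zero]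
        symm
        apply Finset.prod_eq_zero (Finset.mem_univ w)
        simp [hgdef, hv]
    calc ∑ ψ : W → V, lam ψ * Qd ψ (v, w) = ∑ ψ : W → V, ∏ w', g w' (ψ w') :=
          Finset.sum_congr rfl fun ψ _ => step1 ψ
      _ = ∏ w', ∑ x, g w' x := (Fintype.prod_sum g).symm
      _ = q w v * PH w := by
          rw [Finset.prod_eq_single w]
          · simp [hgdef]
          · intro w' _ hw'
            simp only [hgdef, if_neg hw']
            exact hq1 w'
          · intro h; exact absurd (Finset.mem_univ _) h
      _ = P (v, w) := hqP w v
  -- put everything together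
  calc R.F W H PH = ∑ ψ : W → V, lam ψ * R.F W H PH := by
        rw [← Finset.sum_mul, hlam1, one_mul]
    _ ≤ ∑ ψ : W → V, lam ψ * R.F (V × W) (strongProd G H) (Qd ψ) :=
        Finset.sum_le_sum fun ψ _ => mul_le_mul_of_nonneg_left (hmono ψ) (hlam0 ψ)
    _ ≤ R.F (V × W) (strongProd G H) (fun p => ∑ ψ : W → V, lam ψ * Qd ψ p) :=
        jensen R (V × W) (strongProd G H) Finset.univ lam Qd
          (fun ψ _ => hlam0 ψ) hlam1 (fun ψ _ => hQdD ψ)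
    _ = R.F (V × W) (strongProd G H) P := by
        congr 1
        funext p
        obtain ⟨v, w⟩ := p
        exact hmix v w

end
end

section
/- Let G, H be graphs and F the probabilistic refinement of a spectral point f. For P, Q ∈ 𝒫(V(G)×V(H)) with δ = (1/2)‖P − Q‖₁: |(F(G⊠H,P) − F(H,P_H)) − (F(G⊠H,Q) − F(H,Q_H))| ≤ δ·log f(G) + 2η(δ), where η(t) = (1+t)h(1/(1+t)). -/
open Finset MeasureTheory Filter Real

noncomputable section

/-- The function η(t) = (1+t)·h(1/(1+t)). -/
def eta (t : ℝ) : ℝ := (1 + t) * binEnt (1 / (1 + t))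

/-- Half of the ℓ¹ distance (total variation distance). -/
def tvHalf {α : Type} [Fintype α] (P Q : α → ℝ) : ℝ := (1 / 2) * ∑ x, |P x - Q x|

section AuxDistr
variable {V W : Type}

lemma isDistr_margSnd [Fintype V] [Fintype W] {P : V × W → ℝ} (hP : IsDistr P) :
    IsDistr (margSnd P) := by
  refine ⟨fun w => Finset.sum_nonneg fun v _ => hP.1 _, ?_⟩
  rw [← hP.2, Fintype.sum_prod_type, Finset.sum_comm]
  rfl

lemma isDistr_margFst [Fintype V] [Fintype W] {P : V × W → ℝ} (hP : IsDistr P) :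
    IsDistr (margFst P) := by
  refine ⟨fun v => Finset.sum_nonneg fun w _ => hP.1 _, ?_⟩
  rw [← hP.2, Fintype.sum_prod_type]
  rfl

lemma push_nonneg [Fintype V] [Fintype W] (φ : W → V) {P : W → ℝ} (hP : ∀ w, 0 ≤ P w) :
    ∀ v, 0 ≤ push φ P v := by
  intro v
  refine Finset.sum_nonneg fun w _ => ?_
  split
  · exact hP _
  · exact le_refl _

lemma isDistr_push [Fintype V] [Fintype W] (φ : W → V) {P : W → ℝ} (hP : IsDistr P) :
    IsDistr (push φ P) := by
  classical
  refine ⟨push_nonneg φ hP.1, ?_⟩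
  unfold push
  rw [Finset.sum_comm, ← hP.2]
  refine Finset.sum_congr rfl fun w _ => ?_
  simp

lemma isDistr_mix_s11 [Fintype V] {P Q : V → ℝ} (hP : IsDistr P) (hQ : IsDistr Q)
    {t : ℝ} (ht0 : 0 ≤ t) (ht1 : t ≤ 1) :
    IsDistr (fun v => t * P v + (1 - t) * Q v) := by
  constructor
  · intro v
    have h1 := hP.1 v; have h2 := hQ.1 v
    have : 0 ≤ 1 - t := by linarith
    positivity
  · simp only [Finset.sum_add_distrib, ← Finset.mul_sum, hP.2, hQ.2]
    ring

lemma le_margSnd [Fintype V] [Fintype W] {P : V × W → ℝ} (h0 : ∀ x, 0 ≤ P x) (v : V) (w : W) :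
    P (v, w) ≤ margSnd P w :=
  Finset.single_le_sum (f := fun v => P (v, w)) (fun v _ => h0 _) (Finset.mem_univ v)

end AuxDistr

section Concave

/-- Finite Jensen: concavity of `F` for arbitrary finite convex combinations. -/
lemma finConcave (R : PRefinement) (V : Type) [Fintype V] (G : SimpleGraph V)
    {ι : Type} (s : Finset ι) (w : ι → ℝ) (q : ι → V → ℝ)
    (hw0 : ∀ i ∈ s, 0 ≤ w i) (hw1 : ∑ i ∈ s, w i = 1)
    (hq : ∀ i ∈ s, IsDistr (q i)) :
    ∑ i ∈ s, w i * R.F V G (q i) ≤ R.F V G (fun v => ∑ i ∈ s, w i * q i v) := by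
  classical
  induction s using Finset.induction_on generalizing w with
  | empty => simp at hw1
  | @insert a s ha ih =>
    simp only [Finset.sum_insert ha] at hw1 ⊢
    have hwa0 : 0 ≤ w a := hw0 a (Finset.mem_insert_self a s)
    have hrest0 : 0 ≤ ∑ i ∈ s, w i :=
      Finset.sum_nonneg fun i hi => hw0 i (Finset.mem_insert_of_mem hi)
    have hwa1 : w a ≤ 1 := by linarith
    rcases eq_or_lt_of_le hwa1 with h1 | h1
    · -- w a = 1, all the rest are zero
      have hz : ∀ i ∈ s, w i = 0 := by
        intro i hi
        have hle : w i ≤ ∑ j ∈ s, w j :=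
          Finset.single_le_sum (fun j hj => hw0 j (Finset.mem_insert_of_mem hj)) hi
        have := hw0 i (Finset.mem_insert_of_mem hi)
        have : ∑ j ∈ s, w j = 0 := by linarith
        nlinarith [Finset.single_le_sum (fun j hj => hw0 j (Finset.mem_insert_of_mem hj)) hi]
      have hzs : ∑ i ∈ s, w i * R.F V G (q i) = 0 :=
        Finset.sum_eq_zero fun i hi => by rw [hz i hi, zero_mul]
      have hfun : (fun v => w a * q a v + ∑ i ∈ s, w i * q i v) = q a := by
        funext v
        rw [h1, one_mul, Finset.sum_eq_zero fun i hi => by rw [hz i hi, zero_mul], add_zero]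
      rw [hzs, hfun, h1, one_mul, add_zero]
    · -- w a < 1
      set t := w a with htdef
      have hts : ∑ i ∈ s, w i = 1 - t := by linarith
      have h1t : 0 < 1 - t := by linarith
      set Qm : V → ℝ := fun v => ∑ i ∈ s, (w i / (1 - t)) * q i v with hQm
      have hQdistr : IsDistr Qm := by
        constructor
        · intro v
          exact Finset.sum_nonneg fun i hi => mul_nonneg
            (div_nonneg (hw0 i (Finset.mem_insert_of_mem hi)) h1t.le)
            ((hq i (Finset.mem_insert_of_mem hi)).1 v)
        · rw [Finset.sum_comm]
          have : ∀ i ∈ s, ∑ v, w i / (1 - t) * q i v = w i / (1 - t) := by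
            intro i hi
            rw [← Finset.mul_sum, (hq i (Finset.mem_insert_of_mem hi)).2, mul_one]
          rw [Finset.sum_congr rfl this, ← Finset.sum_div, hts, div_self (ne_of_gt h1t)]
      have ihapp := ih (fun i => w i / (1 - t)) (fun i hi => div_nonneg
          (hw0 i (Finset.mem_insert_of_mem hi)) h1t.le)
        (by rw [← Finset.sum_div, hts, div_self (ne_of_gt h1t)])
        (fun i hi => hq i (Finset.mem_insert_of_mem hi))
      have hcc := R.concave V G (q a) Qm t (hq a (Finset.mem_insert_self a s)) hQdistr hwa0 hwa1
      have hmix : (fun v => t * q a v + (1 - t) * Qm v)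
          = (fun v => w a * q a v + ∑ i ∈ s, w i * q i v) := by
        funext v
        rw [hQm]
        rw [Finset.mul_sum]
        congr 1
        refine Finset.sum_congr rfl fun i hi => ?_
        field_simp
      rw [hmix] at hcc
      have step : ∑ i ∈ s, w i * R.F V G (q i)
          = (1 - t) * ∑ i ∈ s, (w i / (1 - t)) * R.F V G (q i) := by
        rw [Finset.mul_sum]
        refine Finset.sum_congr rfl fun i hi => ?_
        field_simp
      rw [step]
      calc t * R.F V G (q a) + (1 - t) * ∑ i ∈ s, (w i / (1 - t)) * R.F V G (q i)
          ≤ t * R.F V G (q a) + (1 - t) * R.F V G Qm := by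
            have := mul_le_mul_of_nonneg_left ihapp h1t.le
            linarith
        _ ≤ _ := hcc

end Concave

section Coupling

open scoped Classical

/-- Classical real-valued indicator. -/
noncomputable def ind (p : Prop) : ℝ := if p then 1 else 0

lemma ind_true {p : Prop} (h : p) : ind p = 1 := if_pos h
lemma ind_false {p : Prop} (h : ¬p) : ind p = 0 := if_neg h

/-- Core combinatorial identity: summing product weights over all functions with a
single constrained coordinate. -/
lemma sum_pi_prod {A W : Type} [Fintype A] [Fintype W] (κ : A → W → ℝ)
    (hκ : ∀ w, ∑ a, κ a w = 1) (w : W) (a : A) :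
    ∑ g : W → A, (∏ w', κ (g w') w') * ind (g w = a) = κ a w := by
  classical
  have key : ∀ g : W → A, (∏ w', κ (g w') w') * ind (g w = a)
      = ∏ w', (if w' = w then (if g w' = a then κ (g w') w' else 0) else κ (g w') w') := by
    intro g
    by_cases hg : g w = a
    · rw [ind_true hg, mul_one]
      refine Finset.prod_congr rfl fun w' _ => ?_
      by_cases hw' : w' = w
      · subst hw'; rw [if_pos rfl, if_pos hg]
      · rw [if_neg hw']
    · rw [ind_false hg, mul_zero]
      symm
      apply Finset.prod_eq_zero (Finset.mem_univ w)
      rw [if_pos rfl, if_neg hg]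
  rw [Finset.sum_congr rfl fun g _ => key g]
  have := (Finset.prod_univ_sum (fun _ : W => (Finset.univ : Finset A))
    (fun w' a' => if w' = w then (if a' = a then κ a' w' else 0) else κ a' w')).symm
  rw [Fintype.piFinset_univ] at this
  rw [this]
  have : ∀ w' : W, (∑ a', if w' = w then (if a' = a then κ a' w' else 0) else κ a' w')
      = if w' = w then κ a w' else 1 := by
    intro w'
    by_cases hw' : w' = w
    · simp [hw']
    · simp [hw', hκ w']
  rw [Finset.prod_congr rfl fun w' _ => this w']
  simp

/-- Coupling lemma: if `P̂` is a convex combination of deterministic pushforwards of `q`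
along complement-homomorphisms, then `F` can only increase. -/
lemma couplingF (R : PRefinement) {W V' : Type} [Fintype W] [Fintype V']
    (H : SimpleGraph W) (Hh : SimpleGraph V')
    {ι : Type} [Fintype ι] (σ : ι → W → V')
    (hσ : ∀ i a b, Hᶜ.Adj a b → Hhᶜ.Adj (σ i a) (σ i b))
    (μ : ι → ℝ) (hμ0 : ∀ i, 0 ≤ μ i) (hμ1 : ∑ i, μ i = 1)
    (q : W → ℝ) (hq : IsDistr q) (Ph : V' → ℝ)
    (hdec : Ph = fun x => ∑ i, μ i * push (σ i) q x) :
    R.F W H q ≤ R.F V' Hh Ph := by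
  have mono : ∀ i, R.F W H q ≤ R.F V' Hh (push (σ i) q) := by
    intro i
    exact R.monoF V' W Hh H ⟨σ i, fun {a b} h => hσ i a b h⟩ q hq
  calc R.F W H q = ∑ i, μ i * R.F W H q := by rw [← Finset.sum_mul, hμ1, one_mul]
    _ ≤ ∑ i, μ i * R.F V' Hh (push (σ i) q) :=
        Finset.sum_le_sum fun i _ => mul_le_mul_of_nonneg_left (mono i) (hμ0 i)
    _ ≤ R.F V' Hh (fun x => ∑ i, μ i * push (σ i) q x) :=
        finConcave R V' Hh Finset.univ μ (fun i => push (σ i) q)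
          (fun i _ => hμ0 i) hμ1 (fun i _ => isDistr_push (σ i) hq)
    _ = R.F V' Hh Ph := by rw [hdec]

end Coupling

section KeyLemmas

open scoped Classical

/-- Conditional nonnegativity: `F(H, P_H) ≤ F(G⊠H, P)`. -/
lemma condF_nonneg (R : PRefinement) {V W : Type} [Fintype V] [Fintype W]
    (G : SimpleGraph V) (H : SimpleGraph W) (P : V × W → ℝ) (hP : IsDistr P) :
    R.F W H (margSnd P) ≤ R.F (V × W) (strongProd G H) P := by
  classical
  have hVW : Nonempty (V × W) := by
    by_contra h
    rw [not_nonempty_iff] at h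
    have h2 := hP.2
    rw [Finset.univ_eq_empty, Finset.sum_empty] at h2
    norm_num at h2
  obtain ⟨⟨v₀, w₀⟩⟩ := hVW
  set m : W → ℝ := margSnd P with hm
  have hm0 : ∀ w, 0 ≤ m w := (isDistr_margSnd hP).1
  set κ : V → W → ℝ := fun v w => if m w = 0 then (if v = v₀ then 1 else 0)
    else P (v, w) / m w with hκdef
  have hκ1 : ∀ w, ∑ v, κ v w = 1 := by
    intro w
    by_cases hw : m w = 0
    · simp [hκdef, hw]
    · simp only [hκdef, hw, if_false]
      rw [← Finset.sum_div]
      exact div_self hw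
  have hκ0 : ∀ v w, 0 ≤ κ v w := by
    intro v w
    by_cases hw : m w = 0
    · simp only [hκdef, hw, if_true]
      split <;> norm_num
    · simp only [hκdef, hw, if_false]
      exact div_nonneg (hP.1 _) (hm0 w)
  have hPm : ∀ v w, m w = 0 → P (v, w) = 0 := by
    intro v w hw
    have h1 : P (v, w) ≤ m w := le_margSnd hP.1 v w
    have h2 := hP.1 (v, w)
    rw [hw] at h1
    linarith
  refine couplingF R (ι := W → V) H (strongProd G H) (fun g w => (g w, w)) ?_ (fun g => ∏ w, κ (g w) w)
    (fun g => Finset.prod_nonneg fun w _ => hκ0 _ _) ?_ m (isDistr_margSnd hP) P ?_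
  · -- homomorphism property
    intro g a b hab
    rw [SimpleGraph.compl_adj] at hab ⊢
    refine ⟨fun hc => hab.1 (congrArg Prod.snd hc), fun hc => ?_⟩
    rcases hc with ⟨hne, h1, h2⟩
    rcases h2 with h2 | h2
    · exact hab.2 h2
    · exact hab.1 h2
  · -- total weight one
    have hps := Finset.prod_univ_sum (fun _ : W => (Finset.univ : Finset V)) (fun w v => κ v w)
    rw [Fintype.piFinset_univ] at hps
    rw [← hps]
    rw [Finset.prod_congr rfl fun w (_ : w ∈ Finset.univ) => hκ1 w]
    simp
  · -- decomposition
    funext x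
    obtain ⟨v, w⟩ := x
    have hpush : ∀ g : W → V, push (fun w' => (g w', w')) m (v, w)
        = ind (g w = v) * m w := by
      intro g
      unfold push
      rw [Finset.sum_eq_single w]
      · by_cases hg : g w = v
        · rw [ind_true hg]
          simp [hg]
        · rw [ind_false hg, if_neg (fun h => hg (congrArg Prod.fst h)), zero_mul]
      · intro b _ hb
        rw [if_neg]
        intro h
        exact hb (congrArg Prod.snd h)
      · intro h
        exact absurd (Finset.mem_univ w) h
    rw [Finset.sum_congr rfl fun (g : W → V) _ => by rw [hpush g]]
    have : ∑ g : W → V, (∏ w', κ (g w') w') * (ind (g w = v) * m w)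
        = (∑ g : W → V, (∏ w', κ (g w') w') * ind (g w = v)) * m w := by
      rw [Finset.sum_mul]
      exact Finset.sum_congr rfl fun g _ => by ring
    rw [this, sum_pi_prod κ hκ1 w v]
    by_cases hw : m w = 0
    · rw [hw, mul_zero, hPm v w hw]
    · simp only [hκdef, hw, if_false]
      exact (div_mul_cancel₀ _ hw).symm

/-- Almost convexity: `F(t q₁ + (1-t) q₂) ≤ t F(q₁) + (1-t) F(q₂) + h(t)`. -/
lemma almostConvexF (R : PRefinement) {W : Type} [Fintype W] (H : SimpleGraph W)
    (q₁ q₂ : W → ℝ) (h1 : IsDistr q₁) (h2 : IsDistr q₂)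
    (t : ℝ) (ht0 : 0 ≤ t) (ht1 : t ≤ 1) :
    R.F W H (fun w => t * q₁ w + (1 - t) * q₂ w)
      ≤ t * R.F W H q₁ + (1 - t) * R.F W H q₂ + binEnt t := by
  classical
  set m : W → ℝ := fun w => t * q₁ w + (1 - t) * q₂ w with hmdef
  have hm : IsDistr m := isDistr_mix_s11 h1 h2 ht0 ht1
  have hterm0 : ∀ w, 0 ≤ t * q₁ w ∧ 0 ≤ (1 - t) * q₂ w := fun w =>
    ⟨mul_nonneg ht0 (h1.1 w), mul_nonneg (by linarith) (h2.1 w)⟩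
  have hmz : ∀ w, m w = 0 → t * q₁ w = 0 ∧ (1 - t) * q₂ w = 0 := by
    intro w hw
    have := (hterm0 w).1; have := (hterm0 w).2
    constructor <;> [skip; skip] <;>
    · simp only [hmdef] at hw
      linarith
  set κ : Bool → W → ℝ := fun b w => if m w = 0 then (if b then 1 else 0)
    else (if b then t * q₁ w / m w else (1 - t) * q₂ w / m w) with hκdef
  have hκ1 : ∀ w, ∑ b, κ b w = 1 := by
    intro w
    by_cases hw : m w = 0
    · simp [hκdef, hw]
    · rw [Fintype.sum_bool]
      simp only [hκdef, hw, if_false, if_true, Bool.false_eq_true]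
      rw [← add_div]
      have hmm : t * q₁ w + (1 - t) * q₂ w = m w := rfl
      rw [hmm]
      exact div_self hw
  have hκ0 : ∀ b w, 0 ≤ κ b w := by
    intro b w
    have hmw := hm.1 w
    by_cases hw : m w = 0
    · simp only [hκdef, hw, if_true]
      cases b <;> simp
    · have hpos : 0 < m w := lt_of_le_of_ne hmw (Ne.symm hw)
      simp only [hκdef, hw, if_false]
      cases b
      · simp only [Bool.false_eq_true, if_false]
        exact div_nonneg (hterm0 w).2 hpos.le
      · simp only [if_true]
        exact div_nonneg (hterm0 w).1 hpos.le
  have key : R.F W H m ≤ R.F (W ⊕ W) (sumGraph H H)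
      (Sum.elim (fun v => t * q₁ v) (fun w => (1 - t) * q₂ w)) := by
    refine couplingF R (ι := W → Bool) H (sumGraph H H)
      (fun s w => if s w then Sum.inl w else Sum.inr w) ?_
      (fun s => ∏ w, κ (s w) w)
      (fun s => Finset.prod_nonneg fun w _ => hκ0 _ _) ?_ m hm _ ?_
    · -- homomorphism property
      intro s a b hab
      rw [SimpleGraph.compl_adj] at hab ⊢
      constructor
      · by_cases hsa : s a <;> by_cases hsb : s b <;> simp [hsa, hsb] <;>
          exact fun h => hab.1 h
      · intro hadj
        by_cases hsa : s a <;> by_cases hsb : s b <;>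
          simp [hsa, hsb, sumGraph] at hadj <;> exact hab.2 hadj
    · -- total weight one
      have hps := Finset.prod_univ_sum (fun _ : W => (Finset.univ : Finset Bool))
        (fun w b => κ b w)
      rw [Fintype.piFinset_univ] at hps
      rw [← hps]
      rw [Finset.prod_congr rfl fun w (_ : w ∈ Finset.univ) => hκ1 w]
      simp
    · -- decomposition
      funext x
      have hpushl : ∀ (s : W → Bool) w,
          push (fun w' => if s w' then Sum.inl w' else Sum.inr w') m (Sum.inl w : W ⊕ W)
          = ind (s w = true) * m w := by
        intro s w
        unfold push
        rw [Finset.sum_eq_single w]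
        · by_cases hs : s w = true
          · rw [ind_true hs]
            simp [hs]
          · rw [ind_false hs]
            simp [hs]
        · intro b _ hb
          by_cases hs : s b <;> simp [hs, Sum.inl.injEq, hb]
        · exact fun h => absurd (Finset.mem_univ w) h
      have hpushr : ∀ (s : W → Bool) w,
          push (fun w' => if s w' then Sum.inl w' else Sum.inr w') m (Sum.inr w : W ⊕ W)
          = ind (s w = false) * m w := by
        intro s w
        unfold push
        rw [Finset.sum_eq_single w]
        · by_cases hs : s w = true
          · rw [ind_false (by simp [hs])]
            simp [hs]
          · rw [ind_true (by simpa using hs)]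
            simp [hs]
        · intro b _ hb
          by_cases hs : s b <;> simp [hs, Sum.inr.injEq, hb]
        · exact fun h => absurd (Finset.mem_univ w) h
      cases x with
      | inl w =>
        rw [Finset.sum_congr rfl fun (s : W → Bool) _ => by rw [hpushl s w]]
        have hre : ∑ s : W → Bool, (∏ w', κ (s w') w') * (ind (s w = true) * m w)
            = (∑ s : W → Bool, (∏ w', κ (s w') w') * ind (s w = true)) * m w := by
          rw [Finset.sum_mul]
          exact Finset.sum_congr rfl fun s _ => by ring
        rw [Sum.elim_inl, hre, sum_pi_prod κ hκ1 w true]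
        by_cases hw : m w = 0
        · rw [hw, mul_zero, (hmz w hw).1]
        · simp only [hκdef, hw, if_false, if_true]
          exact (div_mul_cancel₀ _ hw).symm
      | inr w =>
        rw [Finset.sum_congr rfl fun (s : W → Bool) _ => by rw [hpushr s w]]
        have hre : ∑ s : W → Bool, (∏ w', κ (s w') w') * (ind (s w = false) * m w)
            = (∑ s : W → Bool, (∏ w', κ (s w') w') * ind (s w = false)) * m w := by
          rw [Finset.sum_mul]
          exact Finset.sum_congr rfl fun s _ => by ring
        rw [Sum.elim_inr, hre, sum_pi_prod κ hκ1 w false]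
        by_cases hw : m w = 0
        · rw [hw, mul_zero, (hmz w hw).2]
        · simp only [hκdef, hw, if_false]
          exact (div_mul_cancel₀ _ hw).symm
  calc R.F W H m ≤ _ := key
    _ = t * R.F W H q₁ + (1 - t) * R.F W H q₂ + binEnt t :=
        R.map_sumF W W H H q₁ q₂ t h1 h2 ht0 ht1

end KeyLemmas

section Main

lemma condF_le_logf (R : PRefinement) {V W : Type} [Fintype V] [Fintype W]
    (G : SimpleGraph V) (H : SimpleGraph W) (P : V × W → ℝ) (hP : IsDistr P) :
    R.F (V × W) (strongProd G H) P - R.F W H (margSnd P) ≤ Real.logb 2 (R.f V G) := by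
  have h1 := R.subadd V W G H P hP
  have h2 := R.le_logf V G (margFst P) (isDistr_margFst hP)
  linarith

lemma binEnt_symm (p : ℝ) : binEnt (1 - p) = binEnt p := by
  unfold binEnt
  rw [sub_sub_cancel]
  ring

lemma margSnd_mix {V W : Type} [Fintype V] [Fintype W] (P Q : V × W → ℝ) (t : ℝ) :
    margSnd (fun x => t * P x + (1 - t) * Q x)
      = fun w => t * margSnd P w + (1 - t) * margSnd Q w := by
  funext w
  unfold margSnd
  rw [Finset.sum_add_distrib, ← Finset.mul_sum, ← Finset.mul_sum]

lemma oneSided (R : PRefinement) (V W : Type) [Fintype V] [Fintype W]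
    (G : SimpleGraph V) (H : SimpleGraph W)
    (P Q : V × W → ℝ) (hP : IsDistr P) (hQ : IsDistr Q) :
    (R.F (V × W) (strongProd G H) Q - R.F W H (margSnd Q)) -
      (R.F (V × W) (strongProd G H) P - R.F W H (margSnd P)) ≤
      tvHalf P Q * Real.logb 2 (R.f V G) + 2 * eta (tvHalf P Q) := by
  classical
  have hbinEnt1 : binEnt 1 = 0 := by unfold binEnt; simp
  set δ := tvHalf P Q with hδdef
  have hδ0 : 0 ≤ δ := by
    rw [hδdef]; unfold tvHalf; positivity
  rcases eq_or_lt_of_le hδ0 with hδz | hδpos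
  · -- δ = 0 : P = Q
    have hsum : ∑ x, |P x - Q x| = 0 := by
      have h0 : (1/2 : ℝ) * ∑ x, |P x - Q x| = 0 := hδz.symm
      linarith
    have hPQ : P = Q := by
      funext x
      have h := (Finset.sum_eq_zero_iff_of_nonneg
        (fun x _ => abs_nonneg (P x - Q x))).mp hsum x (Finset.mem_univ x)
      have := abs_eq_zero.mp h
      linarith
    have heta : eta (0:ℝ) = 0 := by
      unfold eta
      norm_num [hbinEnt1]
    rw [hPQ, sub_self, ← hδz, heta]
    norm_num
  · -- δ > 0
    set L := Real.logb 2 (R.f V G) with hLdef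
    set Qp : V × W → ℝ := fun x => max (P x - Q x) 0 / δ with hQpdef
    set Pp : V × W → ℝ := fun x => max (Q x - P x) 0 / δ with hPpdef
    have hmax : ∀ a : ℝ, max a 0 = (a + |a|) / 2 := by
      intro a
      rcases abs_cases a with ⟨h1, h2⟩ | ⟨h1, h2⟩
      · rw [h1, max_eq_left h2]; ring
      · rw [h1, max_eq_right (le_of_lt h2)]; ring
    have hsumdiff : ∑ x, (P x - Q x) = 0 := by
      rw [Finset.sum_sub_distrib, hP.2, hQ.2, sub_self]
    have hsumdiff' : ∑ x, (Q x - P x) = 0 := by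
      rw [Finset.sum_sub_distrib, hP.2, hQ.2, sub_self]
    have habs : ∑ x, |P x - Q x| = 2 * δ := by
      rw [hδdef]; unfold tvHalf; ring
    have habs' : ∑ x, |Q x - P x| = 2 * δ := by
      rw [← habs]
      exact Finset.sum_congr rfl fun x _ => abs_sub_comm _ _
    have hQp : IsDistr Qp := by
      constructor
      · intro x
        rw [hQpdef]
        exact div_nonneg (le_max_right _ _) hδ0
      · rw [hQpdef]
        simp only
        rw [← Finset.sum_div]
        rw [Finset.sum_congr rfl fun x _ => hmax (P x - Q x)]
        rw [← Finset.sum_div, Finset.sum_add_distrib, hsumdiff, habs]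
        field_simp
        ring
    have hPp : IsDistr Pp := by
      constructor
      · intro x
        rw [hPpdef]
        exact div_nonneg (le_max_right _ _) hδ0
      · rw [hPpdef]
        simp only
        rw [← Finset.sum_div]
        rw [Finset.sum_congr rfl fun x _ => hmax (Q x - P x)]
        rw [← Finset.sum_div, Finset.sum_add_distrib, hsumdiff', habs']
        field_simp
        ring
    set lam := δ / (1 + δ) with hlamdef
    have h1δ : (0:ℝ) < 1 + δ := by linarith
    have hl0 : 0 ≤ lam := div_nonneg hδ0 h1δ.le
    have hl1 : lam ≤ 1 := by
      rw [hlamdef, div_le_one h1δ]; linarith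
    set Rm : V × W → ℝ := fun x => lam * Qp x + (1 - lam) * Q x with hRmdef
    have hRm : IsDistr Rm := isDistr_mix_s11 hQp hQ hl0 hl1
    have hRalt : Rm = fun x => lam * Pp x + (1 - lam) * P x := by
      funext x
      rw [hRmdef]
      simp only [hQpdef, hPpdef]
      have key : max (P x - Q x) 0 = (P x - Q x) + max (Q x - P x) 0 := by
        rcases le_total (P x) (Q x) with h | h
        · rw [max_eq_right (by linarith : P x - Q x ≤ 0),
            max_eq_left (by linarith : 0 ≤ Q x - P x)]
          ring
        · rw [max_eq_left (by linarith : 0 ≤ P x - Q x),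
            max_eq_right (by linarith : Q x - P x ≤ 0)]
          ring
      rw [key]
      have hlm : 1 - lam = 1 / (1 + δ) := by
        rw [hlamdef]; field_simp; ring
      rw [hlm, hlamdef]
      field_simp
      ring
    -- the six inequalities
    have hconcJ : lam * R.F (V × W) (strongProd G H) Qp
        + (1 - lam) * R.F (V × W) (strongProd G H) Q
        ≤ R.F (V × W) (strongProd G H) Rm := by
      rw [hRmdef]
      exact R.concave (V × W) (strongProd G H) Qp Q lam hQp hQ hl0 hl1
    have hACH : R.F W H (margSnd Rm) ≤ lam * R.F W H (margSnd Qp)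
        + (1 - lam) * R.F W H (margSnd Q) + binEnt lam := by
      have hms : margSnd Rm = fun w => lam * margSnd Qp w + (1 - lam) * margSnd Q w := by
        rw [hRmdef]; exact margSnd_mix Qp Q lam
      rw [hms]
      exact almostConvexF R H (margSnd Qp) (margSnd Q)
        (isDistr_margSnd hQp) (isDistr_margSnd hQ) lam hl0 hl1
    have hphiQp : R.F W H (margSnd Qp) ≤ R.F (V × W) (strongProd G H) Qp :=
      condF_nonneg R G H Qp hQp
    have hACJ : R.F (V × W) (strongProd G H) Rm ≤ lam * R.F (V × W) (strongProd G H) Pp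
        + (1 - lam) * R.F (V × W) (strongProd G H) P + binEnt lam := by
      rw [hRalt]
      exact almostConvexF R (strongProd G H) Pp P hPp hP lam hl0 hl1
    have hconcH : lam * R.F W H (margSnd Pp) + (1 - lam) * R.F W H (margSnd P)
        ≤ R.F W H (margSnd Rm) := by
      have hms : margSnd Rm = fun w => lam * margSnd Pp w + (1 - lam) * margSnd P w := by
        rw [hRalt]; exact margSnd_mix Pp P lam
      rw [hms]
      exact R.concave W H (margSnd Pp) (margSnd P) lam
        (isDistr_margSnd hPp) (isDistr_margSnd hP) hl0 hl1
    have hlogf : R.F (V × W) (strongProd G H) Pp - R.F W H (margSnd Pp) ≤ L :=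
      condF_le_logf R G H Pp hPp
    -- combine
    have e1 : lam * R.F W H (margSnd Qp) ≤ lam * R.F (V × W) (strongProd G H) Qp :=
      mul_le_mul_of_nonneg_left hphiQp hl0
    have e2 : lam * (R.F (V × W) (strongProd G H) Pp - R.F W H (margSnd Pp)) ≤ lam * L :=
      mul_le_mul_of_nonneg_left hlogf hl0
    have K : (1 - lam) * ((R.F (V × W) (strongProd G H) Q - R.F W H (margSnd Q))
        - (R.F (V × W) (strongProd G H) P - R.F W H (margSnd P)))
        ≤ lam * L + 2 * binEnt lam := by
      nlinarith [hconcJ, hACH, hACJ, hconcH, e1, e2]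
    have e4 : (1 + δ) * lam = δ := by
      rw [hlamdef]; field_simp
    have e3 : (1 + δ) * (1 - lam) = 1 := by
      rw [hlamdef]; field_simp; ring
    have hh : eta δ = (1 + δ) * binEnt lam := by
      unfold eta
      congr 1
      rw [hlamdef]
      rw [show δ / (1 + δ) = 1 - 1 / (1 + δ) by field_simp; ring]
      rw [binEnt_symm]
    set X := (R.F (V × W) (strongProd G H) Q - R.F W H (margSnd Q))
        - (R.F (V × W) (strongProd G H) P - R.F W H (margSnd P)) with hXdef
    calc X = ((1 + δ) * (1 - lam)) * X := by rw [e3, one_mul]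
      _ = (1 + δ) * ((1 - lam) * X) := by ring
      _ ≤ (1 + δ) * (lam * L + 2 * binEnt lam) := mul_le_mul_of_nonneg_left K h1δ.le
      _ = ((1 + δ) * lam) * L + 2 * ((1 + δ) * binEnt lam) := by ring
      _ = δ * L + 2 * eta δ := by rw [e4, ← hh]

end Main

theorem conditional_F_continuity
    (R : PRefinement) (V W : Type) [Fintype V] [Fintype W]
    (G : SimpleGraph V) (H : SimpleGraph W)
    (P Q : V × W → ℝ) (hP : IsDistr P) (hQ : IsDistr Q) :
    |(R.F (V × W) (strongProd G H) P - R.F W H (margSnd P)) -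
        (R.F (V × W) (strongProd G H) Q - R.F W H (margSnd Q))| ≤
      tvHalf P Q * Real.logb 2 (R.f V G) + 2 * eta (tvHalf P Q) := by
  have hsymm : tvHalf Q P = tvHalf P Q := by
    unfold tvHalf
    congr 1
    exact Finset.sum_congr rfl fun x _ => abs_sub_comm _ _
  rw [abs_sub_le_iff]
  constructor
  · have h := oneSided R V W G H Q P hQ hP
    rw [hsymm] at h
    exact h
  · exact oneSided R V W G H P Q hP hQ

end
end
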